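/- The generating function of partitions by perimeter, weighted by p^{rep(λ)} q^{even(λ)}, equals x(1 − (p−1)q(x² + x)) / (1 − p(1+q)x − (1 − p²q)x² − (1−p)(1+q)x³ − (p−1)²qx⁴); that is, Σ_λ p^{rep(λ)} q^{even(λ)} x^{Γ(λ)} equals that rational function, where the sum is over all nonempty integer partitions. -/

import Mathlib

/-- A partition: a nonempty weakly decreasing list of positive integers. -/
def IsPartition (l : List ℕ) : Prop :=
  l ≠ [] ∧ l.Pairwise (· ≥ ·) ∧ ∀ x ∈ l, 0 < x

/-- The perimeter of a partition: largest part plus number of parts minus 1. -/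
def perim (l : List ℕ) : ℕ := l.headI + l.length - 1

/-- Number of repeated parts: indices i with λ_i = λ_{i+1}. -/
def repStat (l : List ℕ) : ℕ :=
  ((List.range (l.length - 1)).filter fun i => l.getD i 0 = l.getD (i + 1) 0).length

/-- Number of even parts. -/
def evenStat (l : List ℕ) : ℕ := l.countP fun x => x % 2 = 0

/-!
A partition of perimeter `n + 2` arises in exactly one way from a partition of perimeter `n + 1`:
by increasing its largest part, which leaves a largest part that is not repeated, or by repeating
its largest part. How `p ^ rep * q ^ even` changes under these two moves depends only on whether
the largest part is even and whether it is repeated. Sorting partitions into these four states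
therefore gives four series satisfying a linear system over `R⟦X⟧`, whose determinant is the
denominator of the generating function; solving the system gives the identity.
-/

def incrHead (l : List ℕ) : List ℕ := (l.headI + 1) :: l.tail

def dupHead (l : List ℕ) : List ℕ := l.headI :: l

def headRepeated : List ℕ → Bool
  | a :: b :: _ => a = b
  | _ => false

def headEven (l : List ℕ) : Bool := l.headI % 2 = 0

def headState (l : List ℕ) : Bool × Bool := (headEven l, headRepeated l)

@[simp] lemma incrHead_cons (h : ℕ) (t : List ℕ) : incrHead (h :: t) = (h + 1) :: t := rfl

@[simp] lemma dupHead_cons (h : ℕ) (t : List ℕ) : dupHead (h :: t) = h :: h :: t := rfl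

@[simp] lemma tail_incrHead (l : List ℕ) : (incrHead l).tail = l.tail := rfl

@[simp] lemma tail_dupHead (l : List ℕ) : (dupHead l).tail = l := rfl

lemma perim_cons (h : ℕ) (t : List ℕ) : perim (h :: t) = h + t.length := by
  simp [perim]

lemma isPartition_cons {h : ℕ} {t : List ℕ} :
    IsPartition (h :: t) ↔
      0 < h ∧ (∀ x ∈ t, x ≤ h) ∧ t.Pairwise (· ≥ ·) ∧ ∀ x ∈ t, 0 < x := by
  simp only [IsPartition, ne_eq, reduceCtorEq, not_false_eq_true, List.pairwise_cons,
    List.mem_cons, forall_eq_or_imp, true_and]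
  tauto

lemma IsPartition.ne_nil {l : List ℕ} (hl : IsPartition l) : l ≠ [] := hl.1

lemma isPartition_incrHead {l : List ℕ} (hl : IsPartition l) : IsPartition (incrHead l) := by
  obtain ⟨h, t, rfl⟩ := List.exists_cons_of_ne_nil hl.ne_nil
  obtain ⟨-, hle, ht, hpos⟩ := isPartition_cons.1 hl
  exact isPartition_cons.2 ⟨h.succ_pos, fun x hx => (hle x hx).trans h.le_succ, ht, hpos⟩

lemma isPartition_dupHead {l : List ℕ} (hl : IsPartition l) : IsPartition (dupHead l) := by
  obtain ⟨h, t, rfl⟩ := List.exists_cons_of_ne_nil hl.ne_nil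
  obtain ⟨hh, hle, -, -⟩ := isPartition_cons.1 hl
  exact isPartition_cons.2 ⟨hh, by simpa using hle, hl.2.1, hl.2.2⟩

lemma perim_incrHead {l : List ℕ} (hl : l ≠ []) : perim (incrHead l) = perim l + 1 := by
  obtain ⟨h, t, rfl⟩ := List.exists_cons_of_ne_nil hl
  simp only [incrHead_cons, perim_cons]
  omega

lemma perim_dupHead {l : List ℕ} (hl : l ≠ []) : perim (dupHead l) = perim l + 1 := by
  obtain ⟨h, t, rfl⟩ := List.exists_cons_of_ne_nil hl
  simp only [dupHead_cons, perim_cons, List.length_cons]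
  omega

lemma exists_eq_incrHead_or_dupHead {l : List ℕ} (hl : IsPartition l) (h2 : 2 ≤ perim l) :
    ∃ l', IsPartition l' ∧ perim l' + 1 = perim l ∧ (l = incrHead l' ∨ l = dupHead l') := by
  obtain ⟨h, t, rfl⟩ := List.exists_cons_of_ne_nil hl.ne_nil
  obtain ⟨-, hle, ht, hpos⟩ := isPartition_cons.1 hl
  rw [perim_cons] at h2 ⊢
  rcases t with _ | ⟨h', t⟩
  · simp only [List.length_nil, add_zero] at h2
    refine ⟨[h - 1], isPartition_cons.2 ⟨by omega, by simp, by simp, by simp⟩, ?_, .inl ?_⟩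
    · simp only [perim_cons, List.length_nil]; omega
    · simp only [incrHead_cons, List.cons.injEq, and_true]; omega
  by_cases hrep : h = h'
  · subst hrep
    refine ⟨h :: t, ⟨List.cons_ne_nil _ _, ht, hpos⟩, ?_, .inr rfl⟩
    simp only [perim_cons, List.length_cons]
    omega
  · have hlt : h' < h := lt_of_le_of_ne (hle h' (by simp)) (Ne.symm hrep)
    have hh' := hpos h' (by simp)
    have hle' : ∀ x ∈ h' :: t, x ≤ h - 1 := by
      intro x hx
      have : x ≤ h' := by
        rcases List.mem_cons.1 hx with rfl | hx
        · exact le_rfl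
        · exact (List.pairwise_cons.1 ht).1 x hx
      omega
    refine ⟨(h - 1) :: h' :: t, isPartition_cons.2 ⟨by omega, hle', ht, hpos⟩, ?_, .inl ?_⟩
    · simp only [perim_cons, List.length_cons]; omega
    · simp only [incrHead_cons]; congr; omega

lemma headRepeated_incrHead {l : List ℕ} (hl : IsPartition l) :
    headRepeated (incrHead l) = false := by
  obtain ⟨h, t, rfl⟩ := List.exists_cons_of_ne_nil hl.ne_nil
  obtain ⟨-, hle, -, -⟩ := isPartition_cons.1 hl
  rcases t with _ | ⟨h', t⟩
  · rfl
  · have := hle h' (by simp)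
    simp only [headRepeated, incrHead_cons, decide_eq_false_iff_not]
    omega

lemma headRepeated_dupHead {l : List ℕ} (hl : l ≠ []) : headRepeated (dupHead l) = true := by
  obtain ⟨h, t, rfl⟩ := List.exists_cons_of_ne_nil hl
  simp [headRepeated]

lemma headEven_incrHead (l : List ℕ) : headEven (incrHead l) = !headEven l := by
  simp only [headEven, incrHead, List.headI_cons, Nat.succ_mod_two_eq_zero_iff, ← decide_not,
    Nat.mod_two_ne_zero]

lemma headEven_dupHead (l : List ℕ) : headEven (dupHead l) = headEven l := rfl

lemma incrHead_injOn : Set.InjOn incrHead {l | l ≠ []} := by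
  rintro (_ | ⟨h, t⟩) hl (_ | ⟨h', t'⟩) hl' heq
  all_goals simp_all

lemma dupHead_injective : Function.Injective dupHead := fun _ _ h => List.tail_eq_of_cons_eq h

def partitionsOfPerim : ℕ → Finset (List ℕ)
  | 0 => ∅
  | 1 => {[1]}
  | n + 2 =>
    (partitionsOfPerim (n + 1)).image incrHead ∪ (partitionsOfPerim (n + 1)).image dupHead

lemma mem_partitionsOfPerim {n : ℕ} {l : List ℕ} :
    l ∈ partitionsOfPerim n ↔ IsPartition l ∧ perim l = n := by
  induction n using Nat.strong_induction_on generalizing l with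
  | _ n ih =>
  match n with
  | 0 =>
    simp only [partitionsOfPerim, Finset.notMem_empty, false_iff, not_and]
    intro hl
    obtain ⟨h, t, rfl⟩ := List.exists_cons_of_ne_nil hl.ne_nil
    have := (isPartition_cons.1 hl).1
    rw [perim_cons]
    omega
  | 1 =>
    simp only [partitionsOfPerim, Finset.mem_singleton]
    refine ⟨?_, fun ⟨hl, hp⟩ => ?_⟩
    · rintro rfl
      exact ⟨isPartition_cons.2 (by simp), rfl⟩
    · obtain ⟨h, t, rfl⟩ := List.exists_cons_of_ne_nil hl.ne_nil
      have := (isPartition_cons.1 hl).1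
      rw [perim_cons] at hp
      obtain rfl : t = [] := List.eq_nil_of_length_eq_zero (by omega)
      obtain rfl : h = 1 := by omega
      rfl
  | n + 2 =>
    simp only [partitionsOfPerim, Finset.mem_union, Finset.mem_image, ih (n + 1) (by omega)]
    constructor
    · rintro (⟨l', ⟨hl', hp⟩, rfl⟩ | ⟨l', ⟨hl', hp⟩, rfl⟩)
      · exact ⟨isPartition_incrHead hl', by rw [perim_incrHead hl'.ne_nil, hp]⟩
      · exact ⟨isPartition_dupHead hl', by rw [perim_dupHead hl'.ne_nil, hp]⟩
    · rintro ⟨hl, hp⟩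
      obtain ⟨l', hl', hp', rfl | rfl⟩ := exists_eq_incrHead_or_dupHead hl (by omega)
      · exact .inl ⟨l', ⟨hl', by omega⟩, rfl⟩
      · exact .inr ⟨l', ⟨hl', by omega⟩, rfl⟩

lemma sum_partitionsOfPerim_add_two {M : Type*} [AddCommMonoid M] (n : ℕ) (f : List ℕ → M) :
    ∑ l ∈ partitionsOfPerim (n + 2), f l =
      ∑ l ∈ partitionsOfPerim (n + 1), f (incrHead l) +
        ∑ l ∈ partitionsOfPerim (n + 1), f (dupHead l) := by
  have hpart {l : List ℕ} (hl : l ∈ partitionsOfPerim (n + 1)) : IsPartition l :=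
    (mem_partitionsOfPerim.1 hl).1
  have hdisj : Disjoint ((partitionsOfPerim (n + 1)).image incrHead)
      ((partitionsOfPerim (n + 1)).image dupHead) := by
    simp only [Finset.disjoint_left, Finset.mem_image, not_exists, not_and]
    rintro _ ⟨l, hl, rfl⟩ l' hl' heq
    have := headRepeated_dupHead (hpart hl').ne_nil
    rw [heq, headRepeated_incrHead (hpart hl)] at this
    exact Bool.false_ne_true this
  rw [partitionsOfPerim, Finset.sum_union hdisj,
    Finset.sum_image fun l hl l' hl' => incrHead_injOn (hpart hl).ne_nil (hpart hl').ne_nil,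
    Finset.sum_image fun l _ l' _ h => dupHead_injective h]

lemma repStat_cons (a : ℕ) (t : List ℕ) :
    repStat (a :: t) = (if headRepeated (a :: t) then 1 else 0) + repStat t := by
  rcases t with _ | ⟨b, t⟩
  · rfl
  simp only [repStat, ← List.countP_eq_length_filter, List.length_cons, Nat.add_sub_cancel,
    List.range_succ_eq_map, List.countP_cons, List.countP_map]
  simp [Function.comp_def, headRepeated, add_comm]

lemma evenStat_cons (a : ℕ) (t : List ℕ) :
    evenStat (a :: t) = (if headEven (a :: t) then 1 else 0) + evenStat t := by
  by_cases h : a % 2 = 0 <;> simp [evenStat, headEven, h, add_comm]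

section Weights

variable {R : Type*} [CommSemiring R] (p q : R)

def partitionWeight (l : List ℕ) : R := p ^ repStat l * q ^ evenStat l

lemma partitionWeight_eq_mul_tail {l : List ℕ} (hl : l ≠ []) :
    partitionWeight p q l =
      (if headRepeated l then p else 1) * (if headEven l then q else 1) *
        partitionWeight p q l.tail := by
  obtain ⟨a, t, rfl⟩ := List.exists_cons_of_ne_nil hl
  simp only [partitionWeight, repStat_cons, evenStat_cons, pow_add, List.tail_cons]
  split_ifs <;> ring

-- Only the tail is weighted: leaving out the largest part's own contribution to `rep` and
-- `even` makes `incrHead` weight-preserving.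
def stateSum (n : ℕ) (s : Bool × Bool) : R :=
  ∑ l ∈ partitionsOfPerim n with headState l = s, partitionWeight p q l.tail

lemma sum_partitionWeight_eq (n : ℕ) :
    ∑ l ∈ partitionsOfPerim n, partitionWeight p q l =
      ∑ s : Bool × Bool, (if s.2 then p else 1) * (if s.1 then q else 1) * stateSum p q n s := by
  rw [← Finset.sum_fiberwise _ headState]
  refine Finset.sum_congr rfl fun s _ => ?_
  rw [stateSum, Finset.mul_sum]
  refine Finset.sum_congr rfl fun l hl => ?_
  obtain ⟨hmem, rfl⟩ := Finset.mem_filter.1 hl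
  exact partitionWeight_eq_mul_tail p q (mem_partitionsOfPerim.1 hmem).1.ne_nil

lemma stateSum_zero (s : Bool × Bool) : stateSum p q 0 s = 0 := by
  simp [stateSum, partitionsOfPerim]

lemma stateSum_one (s : Bool × Bool) : stateSum p q 1 s = if s = (false, false) then 1 else 0 := by
  have h1 : headState [1] = (false, false) := rfl
  rw [stateSum, partitionsOfPerim, Finset.filter_singleton, h1]
  by_cases hs : s = (false, false) <;> simp [hs, eq_comm, partitionWeight, repStat, evenStat]

lemma stateSum_add_two_false (n : ℕ) (e : Bool) :
    stateSum p q (n + 2) (e, false) =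
      stateSum p q (n + 1) (!e, false) + stateSum p q (n + 1) (!e, true) := by
  simp only [stateSum, Finset.sum_filter, sum_partitionsOfPerim_add_two, ← Finset.sum_add_distrib]
  refine Finset.sum_congr rfl fun l hl => ?_
  have hl := (mem_partitionsOfPerim.1 hl).1
  simp only [headState, headEven_incrHead, headRepeated_incrHead hl, headEven_dupHead,
    headRepeated_dupHead hl.ne_nil, tail_incrHead, Prod.mk.injEq]
  cases e <;> cases headEven l <;> cases headRepeated l <;> simp

lemma stateSum_add_two_true (n : ℕ) (e : Bool) :
    stateSum p q (n + 2) (e, true) =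
      (if e then q else 1) *
        (stateSum p q (n + 1) (e, false) + p * stateSum p q (n + 1) (e, true)) := by
  simp only [stateSum, Finset.sum_filter, sum_partitionsOfPerim_add_two, ← Finset.sum_add_distrib,
    Finset.mul_sum]
  refine Finset.sum_congr rfl fun l hl => ?_
  have hl := (mem_partitionsOfPerim.1 hl).1
  simp only [headState, headEven_incrHead, headRepeated_incrHead hl, headEven_dupHead,
    headRepeated_dupHead hl.ne_nil, tail_dupHead, partitionWeight_eq_mul_tail p q hl.ne_nil,
    Prod.mk.injEq]
  cases e <;> cases headEven l <;> cases headRepeated l <;> simp [mul_assoc, mul_left_comm]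

end Weights

section Series

open PowerSeries

variable {R : Type*} [CommSemiring R] (p q : R)

noncomputable def stateSeries (s : Bool × Bool) : R⟦X⟧ := mk fun n => stateSum p q n s

lemma stateSeries_false (e : Bool) :
    stateSeries p q (e, false) =
      (if e then 0 else X) + X * (stateSeries p q (!e, false) + stateSeries p q (!e, true)) := by
  ext (_ | _ | n)
  · cases e <;> simp [stateSeries, stateSum_zero]
  · cases e <;> simp [stateSeries, stateSum_zero, stateSum_one, coeff_X]
  · cases e <;> simp [stateSeries, stateSum_add_two_false, coeff_X]

lemma stateSeries_true (e : Bool) :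
    stateSeries p q (e, true) =
      X * C (if e then q else 1) *
        (stateSeries p q (e, false) + C p * stateSeries p q (e, true)) := by
  ext (_ | _ | n)
  · simp [stateSeries, stateSum_zero]
  · simp [stateSeries, stateSum_zero, stateSum_one, mul_assoc]
  · simp [stateSeries, stateSum_add_two_true, mul_assoc, coeff_C_mul]

end Series

theorem transfer_equations_solution {S : Type*} [CommRing S] {x P Q a b c d : S}
    (hP : IsUnit (1 - P * x)) (hPQ : IsUnit (1 - P * Q * x))
    (ha : a = x + x * (c + d)) (hb : b = x * (a + P * b))
    (hc : c = x * (a + b)) (hd : d = x * Q * (c + P * d)) :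
    (a + P * b + Q * c + P * Q * d) *
        (1 - P * (1 + Q) * x - (1 - P ^ 2 * Q) * x ^ 2 - (1 - P) * (1 + Q) * x ^ 3
          - (P - 1) ^ 2 * Q * x ^ 4) =
      x * (1 - (P - 1) * Q * (x ^ 2 + x)) := by
  set D := 1 - P * (1 + Q) * x - (1 - P ^ 2 * Q) * x ^ 2 - (1 - P) * (1 + Q) * x ^ 3
    - (P - 1) ^ 2 * Q * x ^ 4
  have hc' : c * (1 - P * x) = x * a * (1 - P * x + x) := by
    linear_combination (1 - P * x) * hc + x * hb
  -- Cramer's rule for `a`; once `1 - P x` and `1 - P Q x` are cleared, `b`, `c`, `d` are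
  -- multiples of `a`.
  have ha' : a * D = x * (1 - P * x) * (1 - P * Q * x) := by
    linear_combination (1 - P * x) * (1 - P * Q * x) * ha + x * (1 - P * x) * hd
      + x * (1 - P * Q * x + x * Q) * hc'
  refine (hP.mul hPQ).mul_left_injective ?_
  linear_combination P * (1 - P * Q * x) * D * hb + Q * D * hc'
    + P * Q * (1 - P * x) * D * hd + (1 - (P - 1) * Q * (x ^ 2 + x)) * ha'

open PowerSeries in
lemma partitionGenFun_eq_stateSeries {R : Type*} [CommSemiring R] (p q : R) :
    (mk fun n => ∑ᶠ l ∈ {l : List ℕ | IsPartition l ∧ perim l = n},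
        p ^ repStat l * q ^ evenStat l) =
      stateSeries p q (false, false) + C p * stateSeries p q (false, true) +
        C q * stateSeries p q (true, false) + C p * C q * stateSeries p q (true, true) := by
  ext n
  have hset : {l | IsPartition l ∧ perim l = n} = ↑(partitionsOfPerim n) :=
    Set.ext fun _ => mem_partitionsOfPerim.symm
  rw [coeff_mk, hset, finsum_mem_coe_finset]
  change ∑ l ∈ _, partitionWeight p q l = _
  simp only [sum_partitionWeight_eq, Fintype.sum_prod_type, Fintype.sum_bool, stateSeries,
    map_add, mul_assoc, coeff_C_mul, coeff_mk, if_true, Bool.false_eq_true, if_false]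
  ring

open PowerSeries in
theorem partitionGenFun_mul_eq {R : Type*} [CommRing R] (p q : R) :
    (mk fun n => ∑ᶠ l ∈ {l : List ℕ | IsPartition l ∧ perim l = n},
        p ^ repStat l * q ^ evenStat l) *
      (1 - C (p * (1 + q)) * X - C (1 - p ^ 2 * q) * X ^ 2 - C ((1 - p) * (1 + q)) * X ^ 3
         - C ((p - 1) ^ 2 * q) * X ^ 4) =
    X * (1 - C ((p - 1) * q) * (X ^ 2 + X)) := by
  have hunit (a : R) : IsUnit (1 - C a * X : R⟦X⟧) := by
    simp [isUnit_iff_constantCoeff]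
  simp only [partitionGenFun_eq_stateSeries, map_mul, map_add, map_sub, map_one, map_pow]
  refine transfer_equations_solution (hunit p) (by simpa using hunit (p * q)) ?_ ?_ ?_ ?_
  · simpa using stateSeries_false p q false
  · simpa using stateSeries_true p q false
  · simpa using stateSeries_false p q true
  · simpa using stateSeries_true p q true

open PowerSeries in
theorem gen_fun_rep_even :
    letI p : MvPolynomial (Fin 2) ℤ := MvPolynomial.X 0
    letI q : MvPolynomial (Fin 2) ℤ := MvPolynomial.X 1
    (PowerSeries.mk fun n =>
        ∑ᶠ l ∈ {l : List ℕ | IsPartition l ∧ perim l = n},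
          p ^ repStat l * q ^ evenStat l) *
      (1 - PowerSeries.C (p * (1 + q)) * PowerSeries.X
         - PowerSeries.C (1 - p ^ 2 * q) * PowerSeries.X ^ 2
         - PowerSeries.C ((1 - p) * (1 + q)) * PowerSeries.X ^ 3
         - PowerSeries.C ((p - 1) ^ 2 * q) * PowerSeries.X ^ 4) =
    PowerSeries.X *
      (1 - PowerSeries.C ((p - 1) * q) * (PowerSeries.X ^ 2 + PowerSeries.X)) :=
  partitionGenFun_mul_eq _ _
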